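/- Let C be an open convex cone in a finite-dimensional normed real vector space V and D a balanced cone of directions in V. If f : C → ℝ is D-convex, then f(x + y) ≤ f^∞(x) + f(y) for all y ∈ C and all x ∈ C ∩ D, where f^∞ is the upper recession function of f. -/

import Mathlib

/-!
Convexity of `f` on the segment from `y` to `t • x + y` (whose direction `t • x` lies in `D`)
gives `f (x + y) ≤ (1 - t⁻¹) f y + f (t • x + y) / t` for every `t ≥ 1`. Along the curve
`t ↦ (t, x + t⁻¹ • y)`, which tends to `(∞, x)` inside the cone, the right-hand quotient is
exactly the one in the definition of `f^∞(x)`, and the left side tends to `f (x + y) - f y`.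
-/

open Set Metric Filter

/-- D-convexity of a real-valued function on a set `S`. -/
def DConvexOn {V : Type*} [NormedAddCommGroup V] [NormedSpace ℝ V]
    (D S : Set V) (f : V → ℝ) : Prop :=
  ∀ ⦃x y : V⦄, x ∈ S → y ∈ S → x - y ∈ D → segment ℝ x y ⊆ S →
    ConvexOn ℝ (segment ℝ x y) f

/-- The upper recession function `f^∞(x) = limsup_{t→∞, x'→x, t x'∈C} f(t x')/t`. -/
noncomputable def upperRecession {V : Type*} [NormedAddCommGroup V] [NormedSpace ℝ V]
    (C : Set V) (f : V → ℝ) (x : V) : EReal :=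
  Filter.limsup (fun p : ℝ × V => ((f (p.1 • p.2) / p.1 : ℝ) : EReal))
    ((Filter.atTop ×ˢ nhds x) ⊓ Filter.principal {p : ℝ × V | p.1 • p.2 ∈ C})

open Topology

lemma convex_of_forall_pos_smul_add_mem {V : Type*} [AddCommGroup V] [Module ℝ V] {C : Set V}
    (hC : ∀ ⦃s t : ℝ⦄, 0 < s → 0 < t → ∀ ⦃x y : V⦄, x ∈ C → y ∈ C → s • x + t • y ∈ C) :
    Convex ℝ C :=
  convex_iff_forall_pos.2 fun _ hx _ hy _ _ ha hb _ => hC ha hb hx hy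

lemma le_limsup_of_tendsto_comp {α β γ : Type*} [CompleteLinearOrder γ] [TopologicalSpace γ]
    [OrderTopology γ] {g : α → γ} {F : Filter α} {φ : β → α} {l : Filter β} [l.NeBot]
    (hφ : Tendsto φ l F) {u : β → γ} {a : γ} (hu : Tendsto u l (𝓝 a))
    (hle : ∀ᶠ b in l, u b ≤ g (φ b)) : a ≤ limsup g F :=
  calc a = limsup u l := hu.limsup_eq.symm
    _ ≤ limsup (g ∘ φ) l := limsup_le_limsup hle
    _ ≤ limsup g F := by rw [limsup_comp]; exact limsup_le_limsup_of_le hφ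

section DConvex

variable {V : Type*} [NormedAddCommGroup V] [NormedSpace ℝ V]

lemma DConvexOn.map_add_le {D C : Set V} {f : V → ℝ} (hf : DConvexOn D C f) (hC : Convex ℝ C)
    {x y : V} {t : ℝ} (ht : 1 ≤ t) (hty : t • x + y ∈ C) (hy : y ∈ C) (htx : t • x ∈ D) :
    f (x + y) ≤ (1 - t⁻¹) * f y + f (t • x + y) / t := by
  have ht₀ : 0 < t := one_pos.trans_le ht
  have hconv := hf hty hy (by simpa using htx) (hC.segment_subset hty hy)
  have hpoint : t⁻¹ • (t • x + y) + (1 - t⁻¹) • y = x + y := by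
    rw [smul_add, smul_smul, inv_mul_cancel₀ ht₀.ne', one_smul, sub_smul, one_smul]
    abel
  have h := hconv.2 (left_mem_segment ℝ _ _) (right_mem_segment ℝ _ _) (inv_nonneg.2 ht₀.le)
    (sub_nonneg.2 (inv_le_one_of_one_le₀ ht)) (add_sub_cancel _ _)
  rw [hpoint, smul_eq_mul, smul_eq_mul] at h
  rw [div_eq_inv_mul]
  linarith

lemma tendsto_upperRecession_filter {C : Set V} {x y : V}
    (hC : ∀ᶠ t : ℝ in atTop, t • x + y ∈ C) :
    Tendsto (fun t : ℝ => (t, x + t⁻¹ • y)) atTop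
      (atTop ×ˢ 𝓝 x ⊓ 𝓟 {p : ℝ × V | p.1 • p.2 ∈ C}) := by
  refine tendsto_inf.2 ⟨tendsto_id.prodMk ?_, tendsto_principal.2 ?_⟩
  · simpa using tendsto_const_nhds.add ((tendsto_inv_atTop_zero (𝕜 := ℝ)).smul_const y)
  · filter_upwards [hC, eventually_gt_atTop 0] with t htC ht
    simpa [smul_add, smul_smul, mul_inv_cancel₀ ht.ne'] using htC

end DConvex

theorem dconvex_key_bound_general
    {V : Type*} [NormedAddCommGroup V] [NormedSpace ℝ V]
    (D : Set V) (hDbal : ∀ (t : ℝ), ∀ x ∈ D, t • x ∈ D)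
    (C : Set V)
    (hCcone : ∀ ⦃s t : ℝ⦄, 0 < s → 0 < t → ∀ ⦃x y : V⦄, x ∈ C → y ∈ C → s • x + t • y ∈ C)
    (f : V → ℝ) (hf : DConvexOn D C f)
    (x y : V) (hy : y ∈ C) (hx : x ∈ C ∩ D) :
    ((f (x + y) : ℝ) : EReal) ≤ upperRecession C f x + ((f y : ℝ) : EReal) := by
  have hmem : ∀ t : ℝ, 0 < t → t • x + y ∈ C := fun t ht => by
    simpa using hCcone ht one_pos hx.1 hy
  have hlim : Tendsto (fun t : ℝ => ((f (x + y) - (1 - t⁻¹) * f y : ℝ) : EReal)) atTop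
      (𝓝 ((f (x + y) - f y : ℝ) : EReal)) := by
    refine EReal.tendsto_coe.2 ?_
    simpa using tendsto_const_nhds.sub
      (((tendsto_const_nhds (x := (1 : ℝ))).sub tendsto_inv_atTop_zero).mul_const (f y))
  have hrec : ((f (x + y) - f y : ℝ) : EReal) ≤ upperRecession C f x := by
    refine le_limsup_of_tendsto_comp (tendsto_upperRecession_filter
      ((eventually_gt_atTop 0).mono hmem)) hlim ?_
    filter_upwards [eventually_ge_atTop 1] with t ht
    have ht₀ : (0 : ℝ) < t := one_pos.trans_le ht
    have hchord := hf.map_add_le (convex_of_forall_pos_smul_add_mem hCcone) ht (hmem t ht₀) hy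
      (hDbal t x hx.2)
    simp only [smul_add, smul_smul, mul_inv_cancel₀ ht₀.ne', one_smul]
    exact EReal.coe_le_coe_iff.2 (by linarith)
  calc ((f (x + y) : ℝ) : EReal) = ((f (x + y) - f y : ℝ) : EReal) + ((f y : ℝ) : EReal) := by
        rw [← EReal.coe_add, sub_add_cancel]
    _ ≤ upperRecession C f x + ((f y : ℝ) : EReal) := add_le_add_left hrec _

/-- `f(x + y) ≤ f^∞(x) + f(y)` for `y ∈ C` and `x ∈ C ∩ D`. -/
theorem dconvex_key_bound
    {V : Type*} [NormedAddCommGroup V] [NormedSpace ℝ V] [FiniteDimensional ℝ V]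
    (D : Set V) (hDbal : ∀ (t : ℝ), ∀ x ∈ D, t • x ∈ D)
    (C : Set V) (hCopen : IsOpen C)
    (hCcone : ∀ ⦃s t : ℝ⦄, 0 < s → 0 < t → ∀ ⦃x y : V⦄, x ∈ C → y ∈ C → s • x + t • y ∈ C)
    (f : V → ℝ) (hf : DConvexOn D C f)
    (x y : V) (hy : y ∈ C) (hx : x ∈ C ∩ D) :
    ((f (x + y) : ℝ) : EReal) ≤ upperRecession C f x + ((f y : ℝ) : EReal) :=
  dconvex_key_bound_general D hDbal C hCcone f hf x y hy hx
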